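/- arXiv:2303.14686 — 6 statements merged into one kernel-verified Lean document; each statement's English description precedes it below -/
import Mathlib

section
/- The cubic polynomial P(r) = r^3 + 2 u_s r^2 + (u_s^2 - b ρ_s - μ/(κ ρ_s)) r - μ u_s/(κ ρ_s) has positive discriminant, and hence three distinct real roots. -/
/-- The cubic `P(r) = r^3 + 2 u_s r^2 + (u_s^2 - b ρ_s - μ/(κ ρ_s)) r - μ u_s/(κ ρ_s)`
has positive discriminant, and hence three distinct real roots. -/
theorem stmt_0 (us ρs b μ κ : ℝ) (hus : 0 < us) (hρs : 0 < ρs) (hb : 0 < b)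
    (hμ : 0 < μ) (hκ : 0 < κ) :
    0 < (2*us)^2 * (us^2 - b*ρs - μ/(κ*ρs))^2 - 4*(us^2 - b*ρs - μ/(κ*ρs))^3
      - 4*(2*us)^3 * (-(μ*us/(κ*ρs))) - 27*(-(μ*us/(κ*ρs)))^2
      + 18*(2*us)*(us^2 - b*ρs - μ/(κ*ρs))*(-(μ*us/(κ*ρs))) ∧
    ∃ β₁ β₂ β₃ : ℝ, β₁ ≠ β₂ ∧ β₁ ≠ β₃ ∧ β₂ ≠ β₃ ∧
      ∀ β ∈ ({β₁, β₂, β₃} : Set ℝ),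
        β^3 + 2*us*β^2 + (us^2 - b*ρs - μ/(κ*ρs))*β - μ*us/(κ*ρs) = 0 := by
  have hκρ : (0:ℝ) < κ * ρs := by positivity
  constructor
  · have key : (2*us)^2 * (us^2 - b*ρs - μ/(κ*ρs))^2 - 4*(us^2 - b*ρs - μ/(κ*ρs))^3
      - 4*(2*us)^3 * (-(μ*us/(κ*ρs))) - 27*(-(μ*us/(κ*ρs)))^2
      + 18*(2*us)*(us^2 - b*ρs - μ/(κ*ρs))*(-(μ*us/(κ*ρs)))
      = 4*b*ρs*(b*ρs - us^2)^2 + μ^2*us^2/(κ^2*ρs^2) + 20*μ*b*us^2/κ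
        + 12*μ*b^2*ρs/κ + 12*μ^2*b/(κ^2*ρs) + 4*μ^3/(κ^3*ρs^3) := by
      field_simp
      ring
    rw [key]
    positivity
  · set c : ℝ := μ/(κ*ρs) with hc
    have hcpos : 0 < c := by positivity
    set f : ℝ → ℝ := fun r => r^3 + 2*us*r^2 + (us^2 - b*ρs - c)*r - c*us with hf
    have hfc : Continuous f := by fun_prop
    set M : ℝ := us + b*ρs + c + 1 with hM
    have hM1 : 1 < M := by nlinarith
    have hfM : 0 < f M := by
      have : f M = M*(M+us)^2 - b*ρs*M - c*(M+us) := by simp only [hf]; ring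
      rw [this]
      nlinarith [sq_nonneg (M+us), mul_pos hb hρs]
    have hfnM : f (-M) < 0 := by
      have : f (-M) = -(M*(M-us)^2) + b*ρs*M + c*(M-us) := by simp only [hf]; ring
      have ht : M - us = b*ρs + c + 1 := by rw [hM]; ring
      rw [this, ht]
      have hMpos : (0:ℝ) < M := by linarith
      have htp : (0:ℝ) < b*ρs + c + 1 := by positivity
      have hbc : (0:ℝ) < b*ρs + c := by positivity
      nlinarith [mul_pos hMpos (mul_pos htp hbc), mul_pos hcpos hus]
    have hfnu : 0 < f (-us) := by
      have : f (-us) = b*ρs*us := by simp only [hf]; ring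
      rw [this]; positivity
    have hf0 : f 0 < 0 := by
      have : f 0 = -(c*us) := by simp only [hf]; ring
      rw [this]; nlinarith
    have husM : -M < -us := by nlinarith
    have ivt : ∀ a b' : ℝ, a ≤ b' → f a < 0 → 0 < f b' → ∃ x ∈ Set.Ioo a b', f x = 0 := by
      intro a b' hab ha hb'
      have := intermediate_value_Ioo hab hfc.continuousOn (a := a) (b := b')
      have h0 : (0:ℝ) ∈ Set.Ioo (f a) (f b') := ⟨ha, hb'⟩
      obtain ⟨x, hx, hfx⟩ := this h0
      exact ⟨x, hx, hfx⟩
    have ivt' : ∀ a b' : ℝ, a ≤ b' → 0 < f a → f b' < 0 → ∃ x ∈ Set.Ioo a b', f x = 0 := by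
      intro a b' hab ha hb'
      have := intermediate_value_Ioo' hab hfc.continuousOn (a := a) (b := b')
      have h0 : (0:ℝ) ∈ Set.Ioo (f b') (f a) := ⟨hb', ha⟩
      obtain ⟨x, hx, hfx⟩ := this h0
      exact ⟨x, hx, hfx⟩
    obtain ⟨β₁, hβ₁, hr1⟩ := ivt (-M) (-us) husM.le hfnM hfnu
    obtain ⟨β₂, hβ₂, hr2⟩ := ivt' (-us) 0 (by linarith) hfnu hf0
    obtain ⟨β₃, hβ₃, hr3⟩ := ivt 0 M (by linarith) hf0 hfM
    refine ⟨β₁, β₂, β₃, by linarith [hβ₁.2, hβ₂.1], by linarith [hβ₁.2, hβ₂.1, hβ₂.2, hβ₃.1],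
      by linarith [hβ₂.2, hβ₃.1], ?_⟩
    intro β hβ
    have heq : ∀ x, f x = 0 → x^3 + 2*us*x^2 + (us^2 - b*ρs - μ/(κ*ρs))*x - μ*us/(κ*ρs) = 0 := by
      intro x hx
      have : x^3 + 2*us*x^2 + (us^2 - b*ρs - μ/(κ*ρs))*x - μ*us/(κ*ρs)
          = x^3 + 2*us*x^2 + (us^2 - b*ρs - c)*x - c*us := by rw [hc]; ring
      rw [this]; exact hx
    rcases hβ with h | h | h <;> subst h
    · exact heq _ hr1
    · exact heq _ hr2
    · exact heq _ hr3
end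

section
/- If β is a real root of P(r) = r^3 + 2 u_s r^2 + (u_s^2 - b ρ_s - μ/(κ ρ_s)) r - μ u_s/(κ ρ_s) and additionally β^2 + 2 u_s β + u_s^2 - b ρ_s = 0, then β = -u_s. Consequently, since P(-u_s) = b ρ_s u_s ≠ 0, no root β of P satisfies β^2 + 2 u_s β + u_s^2 - b ρ_s = 0, i.e., the quantity ω = (b ρ_s - u_s^2 - 2 u_s β - β^2)/(κ P'(β)) is nonzero for every root β of P. -/
/-- If `β` is a root of `P` with `β² + 2 u_s β + u_s² - b ρ_s = 0` then `β = -u_s`;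
consequently no root of `P` satisfies that equation, so
`ω = (b ρ_s - u_s² - 2 u_s β - β²)/(κ P'(β)) ≠ 0` at every root `β` with `P'(β) ≠ 0`. -/
theorem stmt_3 (us ρs b μ κ : ℝ) (hus : 0 < us) (hρs : 0 < ρs) (hb : 0 < b)
    (hμ : 0 < μ) (hκ : 0 < κ) :
    (∀ β : ℝ, β^3 + 2*us*β^2 + (us^2 - b*ρs - μ/(κ*ρs))*β - μ*us/(κ*ρs) = 0 →
      β^2 + 2*us*β + us^2 - b*ρs = 0 → β = -us) ∧
    ∀ β : ℝ, β^3 + 2*us*β^2 + (us^2 - b*ρs - μ/(κ*ρs))*β - μ*us/(κ*ρs) = 0 →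
      3*β^2 + 4*us*β + us^2 - b*ρs - μ/(κ*ρs) ≠ 0 →
      (b*ρs - us^2 - 2*us*β - β^2) / (κ * (3*β^2 + 4*us*β + us^2 - b*ρs - μ/(κ*ρs))) ≠ 0 := by
  have hpos : 0 < μ/(κ*ρs) := div_pos hμ (mul_pos hκ hρs)
  have key : ∀ β : ℝ, β^3 + 2*us*β^2 + (us^2 - b*ρs - μ/(κ*ρs))*β - μ*us/(κ*ρs) = 0 →
      β^2 + 2*us*β + us^2 - b*ρs = 0 → β = -us := by
    intro β hc hq
    have hmus : μ*us/(κ*ρs) = (μ/(κ*ρs))*us := by ring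
    have h1 : (μ/(κ*ρs)) * (β + us) = 0 := by
      have : β * (β^2 + 2*us*β + us^2 - b*ρs) = 0 := by rw [hq]; ring
      nlinarith [hc, this]
    have h2 : β + us = 0 := by
      rcases mul_eq_zero.mp h1 with h | h
      · exact absurd h (ne_of_gt hpos)
      · exact h
    linarith
  refine ⟨key, ?_⟩
  intro β hc hd
  have hnum : b*ρs - us^2 - 2*us*β - β^2 ≠ 0 := by
    intro h
    have hq : β^2 + 2*us*β + us^2 - b*ρs = 0 := by linarith
    have := key β hc hq
    rw [this] at hq
    nlinarith [mul_pos hb hρs]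
  exact div_ne_zero hnum (mul_ne_zero (ne_of_gt hκ) hd)
end

section
/- Let β_1, β_2, β_3 be the three distinct real roots of P(r) = r^3 + 2 u_s r^2 + (u_s^2 - b ρ_s - μ/(κ ρ_s)) r - μ u_s/(κ ρ_s), and for each j set ω_j = (b ρ_s - u_s^2 - 2 u_s β_j - β_j^2)/(κ P'(β_j)). Then for j ≠ l with {j,l,p} = {1,2,3}, ω_j - ω_l = (β_j - β_l)/(κ P'(β_j) P'(β_l)) · [ 2 μ u_s^2/(κ ρ_s β_p) + β_p (2 b ρ_s - 2 u_s^2 - μ/(κ ρ_s)) + 2 u_s (b ρ_s - u_s^2) ]. -/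
/-!
Writing `P'(r) = 3r² + 4u r + u² - B - m` (with `B = bρ_s`, `m = μ/(κρ_s)`), the claim is the
identity `N(x) P'(y) - P'(x) N(y) = (x - y) E(z)` for the numerators `N(r) = B - u² - 2ur - r²`,
where `x, y, z` are the roots of `P`. Vieta's formulas express `B` and `z` through `x, y`, and the
term `2mu²/z` equals `2u·xy` since `xyz = mu`; after these substitutions the identity is a
polynomial identity in `x, y, u, m`. The factor `1/κ` is common to both sides.
-/

theorem Fin.esymm_three_eq_of_pairwise_ne {R : Type*} [CommRing R] (f : Fin 3 → R) {j l p : Fin 3}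
    (hjl : j ≠ l) (hjp : j ≠ p) (hlp : l ≠ p) :
    f j + f l + f p = f 0 + f 1 + f 2 ∧
      f j * f l + f j * f p + f l * f p = f 0 * f 1 + f 0 * f 2 + f 1 * f 2 ∧
      f j * f l * f p = f 0 * f 1 * f 2 := by
  fin_cases j <;> fin_cases l <;> fin_cases p <;> simp_all <;> refine ⟨?_, ?_, ?_⟩ <;> ring

section CubicRoots

variable {K : Type*} [Field K] {u B m x y z : K}

theorem cubic_root_numerator_identity
    (hsum : x + y + z = -(2*u)) (hpair : x*y + x*z + y*z = u^2 - B - m) :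
    (B - u^2 - 2*u*x - x^2) * (3*y^2 + 4*u*y + u^2 - B - m)
      - (3*x^2 + 4*u*x + u^2 - B - m) * (B - u^2 - 2*u*y - y^2)
      = (x - y) * (2*u*(x*y) + z*(2*B - 2*u^2 - m) + 2*u*(B - u^2)) := by
  obtain rfl : B = u^2 - m - (x*y + x*z + y*z) := by linear_combination hpair
  obtain rfl : z = -(2*u) - x - y := by linear_combination hsum
  ring

theorem cubic_root_weight_sub (hz : z ≠ 0)
    (hsum : x + y + z = -(2*u)) (hpair : x*y + x*z + y*z = u^2 - B - m) (hprod : x*y*z = m*u)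
    (hPx : 3*x^2 + 4*u*x + u^2 - B - m ≠ 0) (hPy : 3*y^2 + 4*u*y + u^2 - B - m ≠ 0) :
    (B - u^2 - 2*u*x - x^2) / (3*x^2 + 4*u*x + u^2 - B - m)
      - (B - u^2 - 2*u*y - y^2) / (3*y^2 + 4*u*y + u^2 - B - m)
      = (x - y) / ((3*x^2 + 4*u*x + u^2 - B - m) * (3*y^2 + 4*u*y + u^2 - B - m))
        * (2*m*u^2/z + z*(2*B - 2*u^2 - m) + 2*u*(B - u^2)) := by
  have hz_term : 2*m*u^2/z = 2*u*(x*y) := by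
    rw [div_eq_iff hz]
    linear_combination (-2*u) * hprod
  rw [hz_term, div_sub_div _ _ hPx hPy, div_mul_eq_mul_div,
    cubic_root_numerator_identity hsum hpair]

end CubicRoots

theorem stmt_4_general (us ρs b μ κ : ℝ)
    (β : Fin 3 → ℝ)
    (hsum : β 0 + β 1 + β 2 = -(2*us))
    (hpair : β 0 * β 1 + β 0 * β 2 + β 1 * β 2 = us^2 - b*ρs - μ/(κ*ρs))
    (hprod : β 0 * β 1 * β 2 = μ*us/(κ*ρs))
    (j l p : Fin 3) (hjl : j ≠ l) (hjp : j ≠ p) (hlp : l ≠ p)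
    (hβp : β p ≠ 0)
    (hPj : 3*(β j)^2 + 4*us*(β j) + us^2 - b*ρs - μ/(κ*ρs) ≠ 0)
    (hPl : 3*(β l)^2 + 4*us*(β l) + us^2 - b*ρs - μ/(κ*ρs) ≠ 0) :
    (b*ρs - us^2 - 2*us*(β j) - (β j)^2)
        / (κ * (3*(β j)^2 + 4*us*(β j) + us^2 - b*ρs - μ/(κ*ρs)))
      - (b*ρs - us^2 - 2*us*(β l) - (β l)^2)
        / (κ * (3*(β l)^2 + 4*us*(β l) + us^2 - b*ρs - μ/(κ*ρs)))
      = (β j - β l)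
          / (κ * (3*(β j)^2 + 4*us*(β j) + us^2 - b*ρs - μ/(κ*ρs))
               * (3*(β l)^2 + 4*us*(β l) + us^2 - b*ρs - μ/(κ*ρs)))
        * (2*μ*us^2/(κ*ρs*(β p)) + (β p)*(2*b*ρs - 2*us^2 - μ/(κ*ρs))
            + 2*us*(b*ρs - us^2)) := by
  obtain ⟨hsum', hpair', hprod'⟩ := Fin.esymm_three_eq_of_pairwise_ne β hjl hjp hlp
  have key := cubic_root_weight_sub (B := b*ρs) (m := μ/(κ*ρs)) hβp (hsum'.trans hsum)
    (hpair'.trans hpair) (by linear_combination hprod' + hprod) hPj hPl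
  -- as atoms, `P'(β j)` and `P'(β l)` let `ring` split off `κ⁻¹` from `(κ * P'(β j))⁻¹`
  generalize 3*(β j)^2 + 4*us*(β j) + us^2 - b*ρs - μ/(κ*ρs) = Pj at key ⊢
  generalize 3*(β l)^2 + 4*us*(β l) + us^2 - b*ρs - μ/(κ*ρs) = Pl at key ⊢
  linear_combination κ⁻¹ * key

/-- Difference formula for the `ω_j` attached to the three distinct real roots of `P`. -/
theorem stmt_4 (us ρs b μ κ : ℝ) (hus : 0 < us) (hρs : 0 < ρs) (hb : 0 < b)
    (hμ : 0 < μ) (hκ : 0 < κ)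
    (β : Fin 3 → ℝ) (hinj : Function.Injective β)
    (hsum : β 0 + β 1 + β 2 = -(2*us))
    (hpair : β 0 * β 1 + β 0 * β 2 + β 1 * β 2 = us^2 - b*ρs - μ/(κ*ρs))
    (hprod : β 0 * β 1 * β 2 = μ*us/(κ*ρs))
    (j l p : Fin 3) (hjl : j ≠ l) (hjp : j ≠ p) (hlp : l ≠ p)
    (hβp : β p ≠ 0)
    (hPj : 3*(β j)^2 + 4*us*(β j) + us^2 - b*ρs - μ/(κ*ρs) ≠ 0)
    (hPl : 3*(β l)^2 + 4*us*(β l) + us^2 - b*ρs - μ/(κ*ρs) ≠ 0) :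
    (b*ρs - us^2 - 2*us*(β j) - (β j)^2)
        / (κ * (3*(β j)^2 + 4*us*(β j) + us^2 - b*ρs - μ/(κ*ρs)))
      - (b*ρs - us^2 - 2*us*(β l) - (β l)^2)
        / (κ * (3*(β l)^2 + 4*us*(β l) + us^2 - b*ρs - μ/(κ*ρs)))
      = (β j - β l)
          / (κ * (3*(β j)^2 + 4*us*(β j) + us^2 - b*ρs - μ/(κ*ρs))
               * (3*(β l)^2 + 4*us*(β l) + us^2 - b*ρs - μ/(κ*ρs)))
        * (2*μ*us^2/(κ*ρs*(β p)) + (β p)*(2*b*ρs - 2*us^2 - μ/(κ*ρs))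
            + 2*us*(b*ρs - us^2)) :=
  stmt_4_general us ρs b μ κ β hsum hpair hprod j l p hjl hjp hlp hβp hPj hPl
end

section
/- For each nonzero integer n, every root λ of the characteristic polynomial F_n(λ) = λ^3 + (1/κ + 2 i n u_s) λ^2 + (-u_s^2 n^2 + b ρ_s n^2 + μ n^2/(κ ρ_s) + 2 i u_s n/κ) λ + (-u_s^2 n^2/κ + b ρ_s n^2/κ + i μ u_s n^3/(κ ρ_s)) has strictly negative real part. -/
/-!
With `z = λ + i n u_s`, `κ F_n(λ) = (κ λ + 1) (z² + n² b ρ_s) + (n² μ / ρ_s) z`, and `κ λ + 1 = κ z + c`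
with `Re c = 1`. For an equation `(κ z + c) w + ν z = 0` with `w = z² + a`, `a, ν > 0`, multiplying by
`conj w` and taking real parts gives `(κ Re z + Re c) |w|² + ν Re z (|z|² + a) = 0`; here `w ≠ 0`
(otherwise `z = 0` and `w = a`), so `Re z ≥ 0` would make the left side positive.
-/

open Complex ComplexConjugate

theorem Complex.re_neg_of_linear_mul_sq_add_add_eq_zero {z c : ℂ} {κ a ν : ℝ}
    (hκ : 0 ≤ κ) (hc : 0 < c.re) (ha : 0 < a) (hν : 0 < ν)
    (h : (κ * z + c) * (z ^ 2 + a) + ν * z = 0) : z.re < 0 := by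
  set w := z ^ 2 + a
  have hw : w ≠ 0 := by
    intro hw
    have hz : z = 0 := by simpa [hw, hν.ne'] using h
    simp [w, hz, ha.ne'] at hw
  have hre : (κ * z.re + c.re) * normSq w + ν * z.re * (normSq z + a) = 0 := by
    have := congrArg (fun u => (u * conj w).re) h
    simp only [w, add_mul, mul_assoc] at this
    simp [w, normSq_apply, pow_two] at this ⊢
    linear_combination this
  by_contra! hz
  have : 0 < (κ * z.re + c.re) * normSq w := by
    have := normSq_pos.mpr hw
    positivity
  nlinarith [normSq_nonneg z, mul_nonneg hν.le hz]

theorem stmt_5_general (us ρs b μ κ : ℝ) (hρs : 0 < ρs) (hb : 0 < b)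
    (hμ : 0 < μ) (hκ : 0 < κ) (n : ℤ) (hn : n ≠ 0) :
    ∀ lam : ℂ,
      lam^3 + ((1/κ : ℝ) + 2*Complex.I*n*us) * lam^2
        + ((-us^2*n^2 + b*ρs*n^2 + μ*n^2/(κ*ρs) : ℝ) + 2*Complex.I*us*n/(κ:ℝ)) * lam
        + ((-us^2*n^2/κ + b*ρs*n^2/κ : ℝ) + Complex.I*μ*us*n^3/((κ:ℝ)*ρs)) = 0 →
      lam.re < 0 := by
  intro lam h
  have hfactor : (κ * (lam + I * n * us) + (1 - I * κ * n * us)) *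
      ((lam + I * n * us) ^ 2 + (n ^ 2 * b * ρs : ℝ)) + (n ^ 2 * μ / ρs : ℝ) * (lam + I * n * us)
        = 0 := by
    have hκ' : (κ : ℂ) ≠ 0 := mod_cast hκ.ne'
    have hρs' : (ρs : ℂ) ≠ 0 := mod_cast hρs.ne'
    push_cast at h ⊢
    field_simp at h ⊢
    linear_combination h + ρs * n ^ 2 * us ^ 2 * (κ * lam + 1) * I_sq
  simpa using re_neg_of_linear_mul_sq_add_add_eq_zero hκ.le (by simp) (by positivity)
    (by positivity) hfactor

/-- Every root of the characteristic polynomial `F_n` has strictly negative real part. -/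
theorem stmt_5 (us ρs b μ κ : ℝ) (hus : 0 < us) (hρs : 0 < ρs) (hb : 0 < b)
    (hμ : 0 < μ) (hκ : 0 < κ) (n : ℤ) (hn : n ≠ 0) :
    ∀ lam : ℂ,
      lam^3 + ((1/κ : ℝ) + 2*Complex.I*n*us) * lam^2
        + ((-us^2*n^2 + b*ρs*n^2 + μ*n^2/(κ*ρs) : ℝ) + 2*Complex.I*us*n/(κ:ℝ)) * lam
        + ((-us^2*n^2/κ + b*ρs*n^2/κ : ℝ) + Complex.I*μ*us*n^3/((κ:ℝ)*ρs)) = 0 →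
      lam.re < 0 :=
  stmt_5_general us ρs b μ κ hρs hb hμ hκ n hn
end

section
/- Gap property of the spectrum: under the asymptotics λ_n^j = -ω_j + i β_j n + O(1/|n|) with ω_1, ω_2, ω_3 distinct reals and β_1, β_2, β_3 distinct nonzero reals, and assuming all λ_n^j are pairwise distinct, there exists Ĉ > 0 such that |λ_n^j - λ_k^l| ≥ Ĉ for all (n,j) ≠ (k,l) in ℤ* × {1,2,3}. -/
/-!
The model points `-ω j + I β j n` are uniformly separated: for distinct `j` by their real parts,
for equal `j` by their imaginary parts, which differ by at least `|β j|`. Since `λ_n^j` approaches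
them, two eigenvalues that are both close to their model points inherit half of that gap. Only
finitely many eigenvalues are not, and each of them is isolated from all others, because the
eigenvalues are pairwise distinct and only finitely many of them lie in any bounded set.
-/

open Filter Topology Function Metric

section Separation

variable {ι X : Type*} [MetricSpace X] {f g : ι → X}

lemma tendsto_cofinite_cocompact_of_pairwise_le_dist {ε : ℝ} (hε : 0 < ε)
    (hg : Pairwise fun i j => ε ≤ dist (g i) (g j)) : Tendsto g cofinite (cocompact X) :=
  letI : TopologicalSpace ι := ⊥
  haveI : DiscreteTopology ι := ⟨rfl⟩
  tendsto_cofinite_cocompact_of_discrete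
    (isClosedEmbedding_of_pairwise_le_dist hε hg).tendsto_cocompact

lemma tendsto_cofinite_cocompact_of_eventually_dist_le [ProperSpace X] {R : ℝ}
    (hg : Tendsto g cofinite (cocompact X)) (hfg : ∀ᶠ i in cofinite, dist (f i) (g i) ≤ R) :
    Tendsto f cofinite (cocompact X) := by
  rw [tendsto_cofinite_cocompact_iff] at hg ⊢
  intro K hK
  refine ((hg _ (hK.cthickening (r := R))).union hfg).subset fun i hi => ?_
  by_cases hR : dist (f i) (g i) ≤ R
  · exact Or.inl (mem_cthickening_of_dist_le _ _ _ _ hi (dist_comm (g i) (f i) ▸ hR))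
  · exact Or.inr hR

lemma eventually_forall_le_dist_of_tendsto_cocompact [ProperSpace X] (hf : Injective f)
    (hfc : Tendsto f cofinite (cocompact X)) (i : ι) :
    ∀ᶠ c in 𝓝[>] (0 : ℝ), ∀ j, j ≠ i → c ≤ dist (f i) (f j) := by
  have hnear : {j | f j ∈ closedBall (f i) 1}.Finite :=
    tendsto_cofinite_cocompact_iff.1 hfc _ (isCompact_closedBall _ _)
  have hle : ∀ᶠ c in 𝓝[>] (0 : ℝ), c ≤ 1 ∧ ∀ j ∈ {j | f j ∈ closedBall (f i) 1}, j ≠ i →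
      c ≤ dist (f i) (f j) := by
    refine (eventually_nhdsWithin_of_eventually_nhds (eventually_le_nhds one_pos)).and
      (hnear.eventually_all.2 fun j _ => ?_)
    refine eventually_imp_distrib_left.2 fun hji => ?_
    exact eventually_nhdsWithin_of_eventually_nhds
      (eventually_le_nhds (dist_pos.2 (hf.ne hji.symm)))
  filter_upwards [hle] with c ⟨hc1, hc⟩ j hji
  by_cases hj : f j ∈ closedBall (f i) 1
  · exact hc j hj hji
  · exact hc1.trans (by rw [dist_comm]; exact (not_le.1 hj).le)

theorem exists_pos_pairwise_le_dist_of_tendsto_dist [ProperSpace X] {δ : ℝ} (hf : Injective f)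
    (hδ : 0 < δ) (hg : Pairwise fun i j => δ ≤ dist (g i) (g j))
    (hfg : Tendsto (fun i => dist (f i) (g i)) cofinite (𝓝 0)) :
    ∃ c > 0, Pairwise fun i j => c ≤ dist (f i) (f j) := by
  have hclose : ∀ᶠ i in cofinite, dist (f i) (g i) ≤ δ / 4 :=
    hfg.eventually (eventually_le_nhds (by positivity))
  have hfc := tendsto_cofinite_cocompact_of_eventually_dist_le
    (tendsto_cofinite_cocompact_of_pairwise_le_dist hδ hg) hclose
  have hexc : ∀ᶠ c in 𝓝[>] (0 : ℝ), c ≤ δ / 2 ∧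
      ∀ i ∈ {i | ¬ dist (f i) (g i) ≤ δ / 4}, ∀ j, j ≠ i → c ≤ dist (f i) (f j) :=
    (eventually_nhdsWithin_of_eventually_nhds (eventually_le_nhds (by positivity))).and
      (hclose.eventually_all.2 fun i _ => eventually_forall_le_dist_of_tendsto_cocompact hf hfc i)
  obtain ⟨c, ⟨hcδ, hc⟩, hc0⟩ := (hexc.and self_mem_nhdsWithin).exists
  refine ⟨c, hc0, fun i j hij => ?_⟩
  by_cases hi : dist (f i) (g i) ≤ δ / 4
  · by_cases hj : dist (f j) (g j) ≤ δ / 4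
    · have hgij : δ ≤ dist (g i) (g j) := hg hij
      have := dist_triangle4 (g i) (f i) (f j) (g j)
      rw [dist_comm (g i) (f i)] at this
      linarith
    · simpa only [dist_comm] using hc j hj i hij
  · exact hc i hi j hij.symm

end Separation

section Model

variable {ι : Type*}

def modelSpectrum (ω β : ι → ℝ) (p : ℤ × ι) : ℂ := (-(ω p.2) : ℂ) + Complex.I * (β p.2) * p.1

lemma exists_pos_pairwise_le_dist_modelSpectrum [Finite ι] {ω β : ι → ℝ} (hω : Injective ω)
    (hβ : ∀ j, β j ≠ 0) :
    ∃ δ > 0, Pairwise fun p q => δ ≤ dist (modelSpectrum ω β p) (modelSpectrum ω β q) := by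
  have hev : ∀ᶠ δ in 𝓝[>] (0 : ℝ), (∀ j, δ ≤ |β j|) ∧ ∀ j l, j ≠ l → δ ≤ |ω j - ω l| := by
    refine (eventually_all.2 fun j => ?_).and
      (eventually_all.2 fun j => eventually_all.2 fun l =>
        eventually_imp_distrib_left.2 fun hjl => ?_)
    · exact eventually_nhdsWithin_of_eventually_nhds (eventually_le_nhds (abs_pos.2 (hβ j)))
    · exact eventually_nhdsWithin_of_eventually_nhds
        (eventually_le_nhds (abs_pos.2 (sub_ne_zero.2 (hω.ne hjl))))
  obtain ⟨δ, ⟨hδβ, hδω⟩, hδ⟩ := (hev.and self_mem_nhdsWithin).exists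
  refine ⟨δ, hδ, ?_⟩
  rintro ⟨n, j⟩ ⟨k, l⟩ hne
  rw [Complex.dist_eq]
  by_cases hjl : j = l
  · subst hjl
    have hnk : (1 : ℝ) ≤ |(n : ℝ) - k| := by
      exact_mod_cast Int.one_le_abs (sub_ne_zero.2 fun h => hne (by rw [h]))
    calc δ ≤ |β j| * |(n : ℝ) - k| := (hδβ j).trans (le_mul_of_one_le_right (abs_nonneg _) hnk)
      _ = |(modelSpectrum ω β (n, j) - modelSpectrum ω β (k, j)).im| := by
        simp [modelSpectrum, ← abs_mul, mul_sub]
      _ ≤ _ := Complex.abs_im_le_norm _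
  · calc δ ≤ |ω j - ω l| := hδω j l hjl
      _ = |(modelSpectrum ω β (n, j) - modelSpectrum ω β (k, l)).re| := by
        simp [modelSpectrum, neg_add_eq_sub, abs_sub_comm]
      _ ≤ _ := Complex.abs_re_le_norm _

lemma tendsto_abs_fst_cofinite_atTop [Finite ι] :
    Tendsto (fun p : ℤ × ι => |(p.1 : ℝ)|) cofinite atTop := by
  have hfst : Tendsto (Prod.fst : ℤ × ι → ℤ) cofinite cofinite :=
    Tendsto.cofinite_of_finite_preimage_singleton fun n =>
      (((Set.finite_singleton n).prod Set.finite_univ).subset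
        (by intro p hp; simpa using hp)).to_subtype
  simpa only [comp_def, Real.norm_eq_abs] using
    (tendsto_norm_cocompact_atTop.comp Int.tendsto_coe_cofinite).comp hfst

end Model

theorem stmt_14_general (ω β : Fin 3 → ℝ)
    (hωdist : Function.Injective ω)
    (hβne : ∀ j, β j ≠ 0)
    (lam : ℤ → Fin 3 → ℂ)
    (hdist : ∀ n k : ℤ, ∀ j l : Fin 3, n ≠ 0 → k ≠ 0 → (n, j) ≠ (k, l) →
      lam n j ≠ lam k l)
    (hasymp : ∃ C : ℝ, ∃ N : ℕ, ∀ n : ℤ, n ≠ 0 → (N : ℤ) < |n| → ∀ j : Fin 3,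
      ‖lam n j - ((-(ω j) : ℂ) + Complex.I * (β j) * n)‖ ≤ C / |(n : ℝ)|) :
    ∃ Cgap : ℝ, 0 < Cgap ∧ ∀ n k : ℤ, ∀ j l : Fin 3, n ≠ 0 → k ≠ 0 → (n, j) ≠ (k, l) →
      Cgap ≤ ‖lam n j - lam k l‖ := by
  obtain ⟨C, N, hC⟩ := hasymp
  let f : {p : ℤ × Fin 3 // p.1 ≠ 0} → ℂ := fun p => lam p.1.1 p.1.2
  let g : {p : ℤ × Fin 3 // p.1 ≠ 0} → ℂ := fun p => modelSpectrum ω β p.1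
  have hf : Injective f := fun p q hpq => Subtype.ext <| by
    by_contra hne
    exact hdist _ _ _ _ p.2 q.2 hne hpq
  obtain ⟨δ, hδ, hg⟩ := exists_pos_pairwise_le_dist_modelSpectrum hωdist hβne
  have hn : Tendsto (fun p : {p : ℤ × Fin 3 // p.1 ≠ 0} => |(p.1.1 : ℝ)|) cofinite atTop :=
    tendsto_abs_fst_cofinite_atTop.comp Subtype.val_injective.tendsto_cofinite
  have hfg : Tendsto (fun p => dist (f p) (g p)) cofinite (𝓝 0) := by
    refine squeeze_zero' (.of_forall fun _ => dist_nonneg) ?_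
      ((tendsto_const_nhds (x := C)).div_atTop hn)
    filter_upwards [hn.eventually_gt_atTop (N : ℝ)] with p hp
    rw [← Int.cast_abs] at hp
    rw [dist_eq_norm]
    exact hC _ p.2 (by exact_mod_cast hp) _
  obtain ⟨c, hc, hsep⟩ := exists_pos_pairwise_le_dist_of_tendsto_dist hf hδ
    (hg.comp_of_injective Subtype.val_injective) hfg
  refine ⟨c, hc, fun n k j l hn hk hne => ?_⟩
  simpa only [dist_eq_norm] using hsep (i := ⟨(n, j), hn⟩) (j := ⟨(k, l), hk⟩) (by simpa using hne)

/-- Gap property of the spectrum. -/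
theorem stmt_14 (ω β : Fin 3 → ℝ)
    (hωdist : Function.Injective ω)
    (hβdist : Function.Injective β) (hβne : ∀ j, β j ≠ 0)
    (lam : ℤ → Fin 3 → ℂ)
    (hdist : ∀ n k : ℤ, ∀ j l : Fin 3, n ≠ 0 → k ≠ 0 → (n, j) ≠ (k, l) →
      lam n j ≠ lam k l)
    (hasymp : ∃ C : ℝ, ∃ N : ℕ, ∀ n : ℤ, n ≠ 0 → (N : ℤ) < |n| → ∀ j : Fin 3,
      ‖lam n j - ((-(ω j) : ℂ) + Complex.I * (β j) * n)‖ ≤ C / |(n : ℝ)|) :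
    ∃ Cgap : ℝ, 0 < Cgap ∧ ∀ n k : ℤ, ∀ j l : Fin 3, n ≠ 0 → k ≠ 0 → (n, j) ≠ (k, l) →
      Cgap ≤ ‖lam n j - lam k l‖ :=
  stmt_14_general ω β hωdist hβne lam hdist hasymp
end

section
/- Necessary condition for boundary exact controllability with density control: if (ρ, u, S) solves the linearized system ∂_t ρ + u_s ∂_x ρ + ρ_s ∂_x u = 0, ∂_t u + u_s ∂_x u + b ∂_x ρ - (1/ρ_s) ∂_x S = 0, ∂_t S + S/κ - (μ/κ) ∂_x u = 0 on (0,T)×(0,2π) with boundary conditions ρ(t,0) = ρ(t,2π) + q(t), u(t,0) = u(t,2π), S(t,0) = S(t,2π), and (ρ,u,S)(T,·) = (0,0,0), then b ∫_0^{2π} ρ_0 dx = u_s ∫_0^{2π} u_0 dx and ∫_0^{2π} S_0 dx = 0. -/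
/-!
Integrating each equation over `(0, 2π)` turns the `x`-derivatives into boundary values, and the
boundary conditions leave only the control: `d/dt ∫ ρ = u_s q`, `d/dt ∫ u = b q` and
`d/dt ∫ S = -(1/κ) ∫ S`. Hence `b ∫ ρ - u_s ∫ u` and `e^{t/κ} ∫ S` are constant in time, and both
vanish at time `T`.
-/

open MeasureTheory Set intervalIntegral
open scoped Interval

section PartialDerivatives

variable {f : ℝ → ℝ → ℝ}

theorem hasDerivAt_uncurry_left (hf : ContDiff ℝ 1 (Function.uncurry f)) (t x : ℝ) :
    HasDerivAt (fun s => f s x) (fderiv ℝ (Function.uncurry f) (t, x) (1, 0)) t :=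
  (hf.differentiable one_ne_zero (t, x)).hasFDerivAt.comp_hasDerivAt (f := fun s => (s, x)) t
    ((hasDerivAt_id' t).prodMk (hasDerivAt_const t x))

theorem hasDerivAt_uncurry_right (hf : ContDiff ℝ 1 (Function.uncurry f)) (t x : ℝ) :
    HasDerivAt (fun y => f t y) (fderiv ℝ (Function.uncurry f) (t, x) (0, 1)) x :=
  (hf.differentiable one_ne_zero (t, x)).hasFDerivAt.comp_hasDerivAt (f := fun y => (t, y)) x
    ((hasDerivAt_const x t).prodMk (hasDerivAt_id' x))

theorem hasDerivAt_deriv_uncurry_right (hf : ContDiff ℝ 1 (Function.uncurry f)) (t x : ℝ) :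
    HasDerivAt (fun y => f t y) (deriv (fun y => f t y) x) x :=
  (hasDerivAt_uncurry_right hf t x).differentiableAt.hasDerivAt

theorem continuous_deriv_uncurry_left (hf : ContDiff ℝ 1 (Function.uncurry f)) :
    Continuous fun p : ℝ × ℝ => deriv (fun s => f s p.2) p.1 := by
  simp only [fun p : ℝ × ℝ => (hasDerivAt_uncurry_left hf p.1 p.2).deriv]
  exact (hf.continuous_fderiv one_ne_zero).clm_apply continuous_const

theorem continuous_deriv_uncurry_right (hf : ContDiff ℝ 1 (Function.uncurry f)) (t : ℝ) :
    Continuous fun x => deriv (fun y => f t y) x := by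
  simp only [fun x => (hasDerivAt_uncurry_right hf t x).deriv]
  exact ((hf.continuous_fderiv one_ne_zero).clm_apply continuous_const).comp
    (Continuous.prodMk_right t)

theorem hasDerivAt_intervalIntegral_of_contDiff (hf : ContDiff ℝ 1 (Function.uncurry f))
    (a c t₀ : ℝ) :
    HasDerivAt (fun t => ∫ x in a..c, f t x) (∫ x in a..c, deriv (fun s => f s x) t₀) t₀ := by
  obtain ⟨C, hC⟩ := (isCompact_Icc.prod isCompact_uIcc).exists_bound_of_continuousOn
    (continuous_deriv_uncurry_left hf).continuousOn (s := Icc (t₀ - 1) (t₀ + 1) ×ˢ [[a, c]])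
  have hslice : ∀ t, Continuous (f t) := fun t => hf.continuous.comp (Continuous.prodMk_right t)
  refine (hasDerivAt_integral_of_dominated_loc_of_deriv_le (Metric.ball_mem_nhds t₀ one_pos)
    (.of_forall fun t => (hslice t).aestronglyMeasurable) ((hslice t₀).intervalIntegrable a c)
    ((continuous_deriv_uncurry_left hf).comp
      (Continuous.prodMk_right t₀)).aestronglyMeasurable
    (bound := fun _ => C) ?_ intervalIntegrable_const
    (.of_forall fun x _ t _ => (hasDerivAt_uncurry_left hf t x).differentiableAt.hasDerivAt)).2
  refine .of_forall fun x hx t ht => hC (t, x) ⟨?_, uIoc_subset_uIcc hx⟩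
  rw [Metric.mem_ball, Real.dist_eq, abs_lt] at ht
  constructor <;> linarith

end PartialDerivatives

theorem hasDerivAt_intervalIntegral_of_balance {f : ℝ → ℝ → ℝ} {F F' g : ℝ → ℝ} {a c t : ℝ}
    (hf : ContDiff ℝ 1 (Function.uncurry f)) (hac : a ≤ c)
    (hF : ∀ x ∈ [[a, c]], HasDerivAt F (F' x) x) (hF' : IntervalIntegrable F' volume a c)
    (hg : IntervalIntegrable g volume a c)
    (hbal : ∀ x ∈ Ioo a c, deriv (fun s => f s x) t + F' x = g x) :
    HasDerivAt (fun s => ∫ x in a..c, f s x) (F a - F c + ∫ x in a..c, g x) t := by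
  convert hasDerivAt_intervalIntegral_of_contDiff hf a c t using 1
  rw [integral_congr_Ioo_of_le hac fun x hx => eq_sub_of_add_eq (hbal x hx),
    integral_sub hg hF', integral_eq_sub_of_hasDerivAt hF hF']
  ring

theorem eq_of_hasDerivAt_eq_zero {f : ℝ → ℝ} {a c : ℝ} (hac : a < c)
    (hcont : ContinuousOn f (Icc a c)) (hderiv : ∀ t ∈ Ioo a c, HasDerivAt f 0 t) :
    f a = f c := by
  obtain ⟨_, _, hslope⟩ := exists_hasDerivAt_eq_slope f (fun _ => 0) hac hcont hderiv
  rw [eq_comm, div_eq_zero_iff, sub_eq_zero, sub_eq_zero] at hslope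
  exact hslope.elim Eq.symm fun h => absurd h hac.ne'

theorem eq_zero_of_hasDerivAt_eq_mul_self {f : ℝ → ℝ} {a c k : ℝ} (hac : a < c)
    (hcont : ContinuousOn f (Icc a c)) (hderiv : ∀ t ∈ Ioo a c, HasDerivAt f (k * f t) t)
    (hc : f c = 0) : f a = 0 := by
  have hexp : ∀ t, HasDerivAt (fun s => Real.exp (-k * s)) (Real.exp (-k * t) * -k) t := fun t =>
    by simpa using ((hasDerivAt_id t).const_mul (-k)).exp
  have key := eq_of_hasDerivAt_eq_zero (f := fun t => Real.exp (-k * t) * f t) hac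
    ((Continuous.continuousOn (by fun_prop)).mul hcont) fun t ht =>
      ((hexp t).fun_mul (hderiv t ht)).congr_deriv (by ring)
  simpa [hc] using key

section IntegratedEquations

variable {ρ u S : ℝ → ℝ → ℝ} {a c t : ℝ}

theorem hasDerivAt_integral_density (us ρs : ℝ) (hρ : ContDiff ℝ 1 (Function.uncurry ρ))
    (hu : ContDiff ℝ 1 (Function.uncurry u)) (hac : a ≤ c)
    (heq : ∀ x ∈ Ioo a c, deriv (fun s => ρ s x) t + us * deriv (fun y => ρ t y) x
      + ρs * deriv (fun y => u t y) x = 0) :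
    HasDerivAt (fun s => ∫ x in a..c, ρ s x) (us * (ρ t a - ρ t c) + ρs * (u t a - u t c)) t := by
  have := continuous_deriv_uncurry_right hρ t
  have := continuous_deriv_uncurry_right hu t
  convert hasDerivAt_intervalIntegral_of_balance (g := fun _ => 0) hρ hac
    (fun x _ => ((hasDerivAt_deriv_uncurry_right hρ t x).const_mul us).add
      ((hasDerivAt_deriv_uncurry_right hu t x).const_mul ρs))
    ((Continuous.intervalIntegrable (by fun_prop)) _ _) intervalIntegrable_const
    (fun x hx => by linear_combination heq x hx) using 1
  simp only [Pi.add_apply, intervalIntegral.integral_zero, add_zero]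
  ring

theorem hasDerivAt_integral_velocity (us ρs b : ℝ) (hρ : ContDiff ℝ 1 (Function.uncurry ρ))
    (hu : ContDiff ℝ 1 (Function.uncurry u)) (hS : ContDiff ℝ 1 (Function.uncurry S))
    (hac : a ≤ c)
    (heq : ∀ x ∈ Ioo a c, deriv (fun s => u s x) t + us * deriv (fun y => u t y) x
      + b * deriv (fun y => ρ t y) x - (1/ρs) * deriv (fun y => S t y) x = 0) :
    HasDerivAt (fun s => ∫ x in a..c, u s x)
      (us * (u t a - u t c) + b * (ρ t a - ρ t c) - (1/ρs) * (S t a - S t c)) t := by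
  have := continuous_deriv_uncurry_right hρ t
  have := continuous_deriv_uncurry_right hu t
  have := continuous_deriv_uncurry_right hS t
  convert hasDerivAt_intervalIntegral_of_balance (g := fun _ => 0) hu hac
    (fun x _ => (((hasDerivAt_deriv_uncurry_right hu t x).const_mul us).add
      ((hasDerivAt_deriv_uncurry_right hρ t x).const_mul b)).sub
      ((hasDerivAt_deriv_uncurry_right hS t x).const_mul (1/ρs)))
    ((Continuous.intervalIntegrable (by fun_prop)) _ _) intervalIntegrable_const
    (fun x hx => by linear_combination heq x hx) using 1
  simp only [Pi.sub_apply, Pi.add_apply, intervalIntegral.integral_zero, add_zero]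
  ring

theorem hasDerivAt_integral_entropy (μ κ : ℝ) (hu : ContDiff ℝ 1 (Function.uncurry u))
    (hS : ContDiff ℝ 1 (Function.uncurry S)) (hac : a ≤ c)
    (heq : ∀ x ∈ Ioo a c,
      deriv (fun s => S s x) t + S t x / κ - (μ/κ) * deriv (fun y => u t y) x = 0) :
    HasDerivAt (fun s => ∫ x in a..c, S s x)
      (μ / κ * (u t c - u t a) - κ⁻¹ * ∫ x in a..c, S t x) t := by
  have := continuous_deriv_uncurry_right hu t
  have := hS.continuous.comp (Continuous.prodMk_right t)
  convert hasDerivAt_intervalIntegral_of_balance (g := fun x => -κ⁻¹ * S t x) hS hac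
    (fun x _ => (hasDerivAt_deriv_uncurry_right hu t x).const_mul (-(μ / κ)))
    ((Continuous.intervalIntegrable (by fun_prop)) _ _)
    ((Continuous.intervalIntegrable (by fun_prop)) _ _)
    (fun x hx => by linear_combination heq x hx) using 1
  rw [intervalIntegral.integral_const_mul]
  ring

end IntegratedEquations

theorem stmt_18_general (us ρs b μ κ T : ℝ) (hT : 0 < T)
    (ρ u S : ℝ → ℝ → ℝ) (q : ℝ → ℝ)
    (hρ : ContDiff ℝ 1 (Function.uncurry ρ))
    (hu : ContDiff ℝ 1 (Function.uncurry u))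
    (hS : ContDiff ℝ 1 (Function.uncurry S))
    (heq1 : ∀ t ∈ Set.Ioo 0 T, ∀ x ∈ Set.Ioo 0 (2*Real.pi),
      deriv (fun s => ρ s x) t + us * deriv (fun y => ρ t y) x
        + ρs * deriv (fun y => u t y) x = 0)
    (heq2 : ∀ t ∈ Set.Ioo 0 T, ∀ x ∈ Set.Ioo 0 (2*Real.pi),
      deriv (fun s => u s x) t + us * deriv (fun y => u t y) x
        + b * deriv (fun y => ρ t y) x - (1/ρs) * deriv (fun y => S t y) x = 0)
    (heq3 : ∀ t ∈ Set.Ioo 0 T, ∀ x ∈ Set.Ioo 0 (2*Real.pi),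
      deriv (fun s => S s x) t + S t x / κ - (μ/κ) * deriv (fun y => u t y) x = 0)
    (hbdρ : ∀ t ∈ Set.Ioo 0 T, ρ t 0 = ρ t (2*Real.pi) + q t)
    (hbdu : ∀ t ∈ Set.Ioo 0 T, u t 0 = u t (2*Real.pi))
    (hbdS : ∀ t ∈ Set.Ioo 0 T, S t 0 = S t (2*Real.pi))
    (hfinal : ∀ x ∈ Set.Icc 0 (2*Real.pi), ρ T x = 0 ∧ u T x = 0 ∧ S T x = 0) :
    b * (∫ x in (0:ℝ)..(2*Real.pi), ρ 0 x) = us * (∫ x in (0:ℝ)..(2*Real.pi), u 0 x) ∧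
    (∫ x in (0:ℝ)..(2*Real.pi), S 0 x) = 0 := by
  have hπ : (0:ℝ) ≤ 2 * Real.pi := by positivity
  have hvanish : ∀ v : ℝ → ℝ → ℝ, (∀ x ∈ Icc 0 (2 * Real.pi), v T x = 0) →
      ∫ x in (0:ℝ)..(2*Real.pi), v T x = 0 :=
    fun v hv => (integral_congr fun x hx => hv x (uIcc_of_le hπ ▸ hx)).trans integral_zero
  have hmassρ : ∀ t ∈ Ioo 0 T, HasDerivAt (fun s => ∫ x in (0:ℝ)..(2*Real.pi), ρ s x)
      (us * q t) t := fun t ht =>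
    (hasDerivAt_integral_density us ρs hρ hu hπ (heq1 t ht)).congr_deriv
      (by rw [hbdρ t ht, hbdu t ht]; ring)
  have hmassu : ∀ t ∈ Ioo 0 T, HasDerivAt (fun s => ∫ x in (0:ℝ)..(2*Real.pi), u s x)
      (b * q t) t := fun t ht =>
    (hasDerivAt_integral_velocity us ρs b hρ hu hS hπ (heq2 t ht)).congr_deriv
      (by rw [hbdρ t ht, hbdu t ht, hbdS t ht]; ring)
  have hmassS : ∀ t ∈ Ioo 0 T, HasDerivAt (fun s => ∫ x in (0:ℝ)..(2*Real.pi), S s x)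
      (-κ⁻¹ * ∫ x in (0:ℝ)..(2*Real.pi), S t x) t := fun t ht =>
    (hasDerivAt_integral_entropy μ κ hu hS hπ (heq3 t ht)).congr_deriv
      (by rw [hbdu t ht]; ring)
  have hcont : ∀ v : ℝ → ℝ → ℝ, ContDiff ℝ 1 (Function.uncurry v) →
      Continuous fun t => ∫ x in (0:ℝ)..(2*Real.pi), v t x :=
    fun v hv => continuous_parametric_intervalIntegral_of_continuous' hv.continuous _ _
  have hmomentum := eq_of_hasDerivAt_eq_zero
    (f := fun t => b * (∫ x in (0:ℝ)..(2*Real.pi), ρ t x) - us * ∫ x in (0:ℝ)..(2*Real.pi), u t x)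
    hT ((continuous_const.mul (hcont ρ hρ)).sub (continuous_const.mul (hcont u hu))).continuousOn
    fun t ht =>
      (((hmassρ t ht).const_mul b).sub ((hmassu t ht).const_mul us)).congr_deriv (by ring)
  rw [hvanish ρ fun x hx => (hfinal x hx).1, hvanish u fun x hx => (hfinal x hx).2.1] at hmomentum
  have hentropy := eq_zero_of_hasDerivAt_eq_mul_self hT (hcont S hS).continuousOn hmassS
    (hvanish S fun x hx => (hfinal x hx).2.2)
  exact ⟨by linarith, hentropy⟩

/-- Necessary condition for boundary exact controllability with density control:
if a (continuously differentiable) solution of the linearized compressible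
Navier–Stokes–Maxwell system with boundary control `q` in the density reaches zero at
time `T`, then `b ∫ ρ₀ = u_s ∫ u₀` and `∫ S₀ = 0`. -/
theorem stmt_18 (us ρs b μ κ T : ℝ) (hus : 0 < us) (hρs : 0 < ρs) (hb : 0 < b)
    (hμ : 0 < μ) (hκ : 0 < κ) (hT : 0 < T)
    (ρ u S : ℝ → ℝ → ℝ) (q : ℝ → ℝ)
    (hρ : ContDiff ℝ 1 (Function.uncurry ρ))
    (hu : ContDiff ℝ 1 (Function.uncurry u))
    (hS : ContDiff ℝ 1 (Function.uncurry S))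
    (heq1 : ∀ t ∈ Set.Ioo 0 T, ∀ x ∈ Set.Ioo 0 (2*Real.pi),
      deriv (fun s => ρ s x) t + us * deriv (fun y => ρ t y) x
        + ρs * deriv (fun y => u t y) x = 0)
    (heq2 : ∀ t ∈ Set.Ioo 0 T, ∀ x ∈ Set.Ioo 0 (2*Real.pi),
      deriv (fun s => u s x) t + us * deriv (fun y => u t y) x
        + b * deriv (fun y => ρ t y) x - (1/ρs) * deriv (fun y => S t y) x = 0)
    (heq3 : ∀ t ∈ Set.Ioo 0 T, ∀ x ∈ Set.Ioo 0 (2*Real.pi),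
      deriv (fun s => S s x) t + S t x / κ - (μ/κ) * deriv (fun y => u t y) x = 0)
    (hbdρ : ∀ t ∈ Set.Ioo 0 T, ρ t 0 = ρ t (2*Real.pi) + q t)
    (hbdu : ∀ t ∈ Set.Ioo 0 T, u t 0 = u t (2*Real.pi))
    (hbdS : ∀ t ∈ Set.Ioo 0 T, S t 0 = S t (2*Real.pi))
    (hfinal : ∀ x ∈ Set.Icc 0 (2*Real.pi), ρ T x = 0 ∧ u T x = 0 ∧ S T x = 0) :
    b * (∫ x in (0:ℝ)..(2*Real.pi), ρ 0 x) = us * (∫ x in (0:ℝ)..(2*Real.pi), u 0 x) ∧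
    (∫ x in (0:ℝ)..(2*Real.pi), S 0 x) = 0 :=
  stmt_18_general us ρs b μ κ T hT ρ u S q hρ hu hS heq1 heq2 heq3 hbdρ hbdu hbdS hfinal
end
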